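/- arXiv:2509.17772 — 5 statements merged into one kernel-verified Lean document; each statement's English description precedes it below -/
import Mathlib

section
/- Let n ≥ 1 and let γ = (x, y) : [0,1] → ℝⁿ × ℝⁿ be a continuously differentiable path with γ(0) = γ(1). Then the symplectic action of γ is bounded by its length squared: |∫₀¹ ⟨x(t), y′(t)⟩ dt| ≤ (1/2)·(∫₀¹ ‖γ′(t)‖ dt)². -/
/-!
Write `γ = (x, y)`. Since `y` is closed, `∫ ⟪c, y'⟫ = 0` for every constant `c`, so the action
equals `∫ ⟪x - x 0, y'⟫`; as `‖x t - x 0‖ ≤ ℓ(x)`, it is bounded by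
`ℓ(x) ℓ(y) ≤ ((ℓ(x) + ℓ(y)) / 2) ^ 2`. Pointwise `‖x'‖ + ‖y'‖ ≤ √2 ‖γ'‖`, hence
`ℓ(x) + ℓ(y) ≤ √2 ℓ(γ)`.
-/

open intervalIntegral MeasureTheory Set
open scoped RealInnerProductSpace

section FTC

variable {E : Type*} [NormedAddCommGroup E] [NormedSpace ℝ E] [CompleteSpace E]
  {f f' : ℝ → E} {a b : ℝ}

theorem integral_eq_sub_of_hasDerivWithinAt_Icc (hab : a ≤ b)
    (hf : ∀ t ∈ Icc a b, HasDerivWithinAt f (f' t) (Icc a b) t)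
    (hf' : IntervalIntegrable f' volume a b) :
    ∫ t in a..b, f' t = f b - f a :=
  integral_eq_sub_of_hasDerivAt_of_le hab (fun t ht => (hf t ht).continuousWithinAt)
    (fun t ht => (hf t (Ioo_subset_Icc_self ht)).hasDerivAt (Icc_mem_nhds ht.1 ht.2)) hf'

theorem norm_sub_le_integral_norm_deriv
    (hf : ∀ t ∈ Icc a b, HasDerivWithinAt f (f' t) (Icc a b) t)
    (hf' : IntervalIntegrable f' volume a b) {t : ℝ} (ht : t ∈ Icc a b) :
    ‖f t - f a‖ ≤ ∫ s in a..b, ‖f' s‖ := by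
  have hsub : Icc a t ⊆ Icc a b := Icc_subset_Icc_right ht.2
  have hf'_at : IntervalIntegrable f' volume a t :=
    hf'.mono_set (by simpa [uIcc_of_le ht.1, uIcc_of_le (ht.1.trans ht.2)] using hsub)
  calc ‖f t - f a‖ = ‖∫ s in a..t, f' s‖ := by
        rw [integral_eq_sub_of_hasDerivWithinAt_Icc ht.1
          (fun s hs => (hf s (hsub hs)).mono hsub) hf'_at]
    _ ≤ ∫ s in a..t, ‖f' s‖ := norm_integral_le_integral_norm ht.1
    _ ≤ ∫ s in a..b, ‖f' s‖ :=
        integral_mono_interval le_rfl ht.1 ht.2 (.of_forall fun _ => norm_nonneg _) hf'.norm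

end FTC

section Action

variable {F : Type*} [NormedAddCommGroup F] [InnerProductSpace ℝ F] [CompleteSpace F]
  {x x' y y' : ℝ → F} {a b : ℝ}

theorem integral_inner_const_deriv_eq_zero (hab : a ≤ b)
    (hy : ∀ t ∈ Icc a b, HasDerivWithinAt y (y' t) (Icc a b) t)
    (hy' : IntervalIntegrable y' volume a b) (hclosed : y a = y b) (c : F) :
    ∫ t in a..b, ⟪c, y' t⟫ = 0 := by
  have h := (innerSL ℝ c).intervalIntegral_comp_comm hy'
  simp only [innerSL_apply_apply] at h
  rw [h, integral_eq_sub_of_hasDerivWithinAt_Icc hab hy hy', hclosed, sub_self, inner_zero_right]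

theorem abs_integral_inner_deriv_le (hab : a ≤ b)
    (hx : ∀ t ∈ Icc a b, HasDerivWithinAt x (x' t) (Icc a b) t)
    (hx' : IntervalIntegrable x' volume a b)
    (hy : ∀ t ∈ Icc a b, HasDerivWithinAt y (y' t) (Icc a b) t)
    (hy' : ContinuousOn y' (Icc a b)) (hclosed : y a = y b) :
    |∫ t in a..b, ⟪x t, y' t⟫| ≤ (∫ t in a..b, ‖x' t‖) * ∫ t in a..b, ‖y' t‖ := by
  have hxc : ContinuousOn x (Icc a b) := fun t ht => (hx t ht).continuousWithinAt
  have hy'i : IntervalIntegrable y' volume a b := hy'.intervalIntegrable_of_Icc hab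
  have hshift : IntervalIntegrable (fun t => ⟪x t - x a, y' t⟫) volume a b :=
    ((hxc.sub continuousOn_const).inner hy').intervalIntegrable_of_Icc hab
  have hconst : IntervalIntegrable (fun t => ⟪x a, y' t⟫) volume a b :=
    (continuousOn_const.inner hy').intervalIntegrable_of_Icc hab
  have hbase : ∫ t in a..b, ⟪x t, y' t⟫ = ∫ t in a..b, ⟪x t - x a, y' t⟫ := by
    rw [← add_zero (∫ t in a..b, ⟪x t - x a, y' t⟫),
      ← integral_inner_const_deriv_eq_zero hab hy hy'i hclosed (x a), ← integral_add hshift hconst]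
    exact integral_congr fun t _ => by rw [← inner_add_left, sub_add_cancel]
  rw [hbase, ← intervalIntegral.integral_const_mul]
  calc |∫ t in a..b, ⟪x t - x a, y' t⟫|
      ≤ ∫ t in a..b, |⟪x t - x a, y' t⟫| := abs_integral_le_integral_abs hab
    _ ≤ ∫ t in a..b, (∫ s in a..b, ‖x' s‖) * ‖y' t‖ := by
        refine integral_mono_on hab hshift.abs (hy'i.norm.const_mul _) fun t ht => ?_
        calc |⟪x t - x a, y' t⟫| ≤ ‖x t - x a‖ * ‖y' t‖ := abs_real_inner_le_norm _ _
          _ ≤ _ := by gcongr; exact norm_sub_le_integral_norm_deriv hx hx' ht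

end Action

theorem WithLp.norm_fst_add_norm_snd_le {E F : Type*} [SeminormedAddCommGroup E]
    [SeminormedAddCommGroup F] (v : WithLp 2 (E × F)) :
    ‖v.fst‖ + ‖v.snd‖ ≤ √2 * ‖v‖ := by
  rw [← Real.sqrt_sq (norm_nonneg v), ← Real.sqrt_mul zero_le_two,
    Real.le_sqrt (by positivity) (by positivity), WithLp.prod_norm_sq_eq_of_L2]
  nlinarith [sq_nonneg (‖v.fst‖ - ‖v.snd‖)]

theorem integral_norm_fst_add_integral_norm_snd_le {E F : Type*} [SeminormedAddCommGroup E]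
    [SeminormedAddCommGroup F] {v : ℝ → WithLp 2 (E × F)} {a b : ℝ} (hab : a ≤ b)
    (hv : ContinuousOn v (Icc a b)) :
    (∫ t in a..b, ‖(v t).fst‖) + ∫ t in a..b, ‖(v t).snd‖ ≤ √2 * ∫ t in a..b, ‖v t‖ := by
  have hfst : IntervalIntegrable (fun t => ‖(v t).fst‖) volume a b :=
    ((WithLp.continuous_fst ..).comp_continuousOn hv).norm.intervalIntegrable_of_Icc hab
  have hsnd : IntervalIntegrable (fun t => ‖(v t).snd‖) volume a b :=
    ((WithLp.continuous_snd ..).comp_continuousOn hv).norm.intervalIntegrable_of_Icc hab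
  rw [← integral_add hfst hsnd, ← intervalIntegral.integral_const_mul]
  exact integral_mono_on hab (hfst.add hsnd) ((hv.norm.intervalIntegrable_of_Icc hab).const_mul _)
    fun t _ => WithLp.norm_fst_add_norm_snd_le (v t)

section Isoperimetric

variable {F : Type*} [NormedAddCommGroup F] [InnerProductSpace ℝ F] [CompleteSpace F]
  {γ γ' : ℝ → WithLp 2 (F × F)} {a b : ℝ}

theorem abs_action_le_half_sq_length (hab : a ≤ b)
    (hγ : ∀ t ∈ Icc a b, HasDerivWithinAt γ (γ' t) (Icc a b) t) (hγ' : ContinuousOn γ' (Icc a b))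
    (hclosed : γ a = γ b) :
    |∫ t in a..b, ⟪(γ t).fst, (γ' t).snd⟫| ≤ 1 / 2 * (∫ t in a..b, ‖γ' t‖) ^ 2 := by
  have hcomp (L : WithLp 2 (F × F) →L[ℝ] F) :
      ∀ t ∈ Icc a b, HasDerivWithinAt (fun s => L (γ s)) (L (γ' t)) (Icc a b) t :=
    fun t ht => L.hasFDerivAt.comp_hasDerivWithinAt t (hγ t ht)
  set Lx := ∫ t in a..b, ‖(γ' t).fst‖
  set Ly := ∫ t in a..b, ‖(γ' t).snd‖
  have hsum : Lx + Ly ≤ √2 * ∫ t in a..b, ‖γ' t‖ :=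
    integral_norm_fst_add_integral_norm_snd_le hab hγ'
  have hLx : 0 ≤ Lx := integral_nonneg hab fun _ _ => norm_nonneg _
  have hLy : 0 ≤ Ly := integral_nonneg hab fun _ _ => norm_nonneg _
  calc |∫ t in a..b, ⟪(γ t).fst, (γ' t).snd⟫|
      ≤ Lx * Ly :=
        abs_integral_inner_deriv_le hab (hcomp (WithLp.fstL 2 ℝ F F))
          (((WithLp.continuous_fst ..).comp_continuousOn hγ').intervalIntegrable_of_Icc hab)
          (hcomp (WithLp.sndL 2 ℝ F F)) ((WithLp.continuous_snd ..).comp_continuousOn hγ')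
          (congrArg WithLp.snd hclosed)
    _ ≤ ((Lx + Ly) / 2) ^ 2 := by nlinarith [four_mul_le_sq_add Lx Ly]
    _ ≤ (√2 * (∫ t in a..b, ‖γ' t‖) / 2) ^ 2 := by gcongr
    _ = 1 / 2 * (∫ t in a..b, ‖γ' t‖) ^ 2 := by
        rw [div_pow, mul_pow, Real.sq_sqrt zero_le_two]; ring

end Isoperimetric

set_option maxHeartbeats 4000000 in
set_option synthInstance.maxHeartbeats 400000 in
theorem loop_isoperimetric_inequality_general (n : ℕ)
    (γ γ' : ℝ → WithLp 2 (EuclideanSpace ℝ (Fin n) × EuclideanSpace ℝ (Fin n)))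
    (hderiv : ∀ t ∈ Set.Icc (0:ℝ) 1, HasDerivWithinAt γ (γ' t) (Set.Icc 0 1) t)
    (hcont : ContinuousOn γ' (Set.Icc 0 1))
    (hclosed : γ 0 = γ 1) :
    |∫ t in (0:ℝ)..1,
        (inner ℝ ((WithLp.equiv 2 _ (γ t)).1) ((WithLp.equiv 2 _ (γ' t)).2) : ℝ)| ≤
      (1 / 2) * (∫ t in (0:ℝ)..1, ‖γ' t‖) ^ 2 :=
  abs_action_le_half_sq_length zero_le_one hderiv hcont hclosed

set_option maxHeartbeats 4000000 in
set_option synthInstance.maxHeartbeats 400000 in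
/-- Isoperimetric inequality for closed loops in ℝⁿ × ℝⁿ (Euclidean norm):
the symplectic action `∫ ⟨x, y'⟩` of a C¹ loop `γ = (x, y)` is bounded by half the
square of its length. The Euclidean norm on ℝⁿ × ℝⁿ is realized via the `L²` product
`WithLp 2 (EuclideanSpace ℝ (Fin n) × EuclideanSpace ℝ (Fin n))`. -/
theorem loop_isoperimetric_inequality (n : ℕ) (hn : 1 ≤ n)
    (γ γ' : ℝ → WithLp 2 (EuclideanSpace ℝ (Fin n) × EuclideanSpace ℝ (Fin n)))
    (hderiv : ∀ t ∈ Set.Icc (0:ℝ) 1, HasDerivWithinAt γ (γ' t) (Set.Icc 0 1) t)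
    (hcont : ContinuousOn γ' (Set.Icc 0 1))
    (hclosed : γ 0 = γ 1) :
    |∫ t in (0:ℝ)..1,
        (inner ℝ ((WithLp.equiv 2 _ (γ t)).1) ((WithLp.equiv 2 _ (γ' t)).2) : ℝ)| ≤
      (1 / 2) * (∫ t in (0:ℝ)..1, ‖γ' t‖) ^ 2 :=
  loop_isoperimetric_inequality_general n γ γ' hderiv hcont hclosed
end

section
/- Fix n ≥ 1 and 0 ≤ m ≤ n. For every continuously differentiable path γ : [0,1] → ℝⁿ × ℝⁿ with γ(0) ∈ L₀ and γ(1) ∈ L₁, and every t ∈ [0,1], one has dist(γ(t), L₀ ∩ L₁) ≤ (1 + 1/√2)·ℓ(γ), where ℓ(γ) = ∫₀¹ ‖γ′(s)‖ ds. -/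
/-- ℝⁿ × ℝⁿ with the Euclidean (L²) norm. -/
noncomputable abbrev E2 (n : ℕ) :=
  WithLp 2 (EuclideanSpace ℝ (Fin n) × EuclideanSpace ℝ (Fin n))

/-- The Lagrangian subspace `L₀ = {(x, y) : x = 0}`. -/
def L0 (n : ℕ) : Set (E2 n) :=
  {p | (WithLp.equiv 2 _ p).1 = 0}

/-- The Lagrangian subspace `L₁ = {(x, y) : xⱼ = 0 for 1 ≤ j ≤ m, yⱼ = 0 for m < j ≤ n}`. -/
def L1 (n m : ℕ) : Set (E2 n) :=
  {p | (∀ j : Fin n, (j : ℕ) < m → (WithLp.equiv 2 _ p).1 j = 0) ∧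
       (∀ j : Fin n, m ≤ (j : ℕ) → (WithLp.equiv 2 _ p).2 j = 0)}

set_option synthInstance.maxHeartbeats 400000
set_option maxHeartbeats 4000000

/-!
Write `d = dist(·, L₀ ∩ L₁)` and `P` for the orthogonal projection onto
`L₀ ∩ L₁ = {x = 0, yⱼ = 0 for j > m}`. For `p ∈ L₀` and `q ∈ L₁`, the vectors `p - P p` and
`q - P q` are supported on the disjoint coordinate blocks `y_{>m}` and `x_{>m}`, on which `p - q`
agrees with them, so `d(p)² + d(q)² ≤ ‖p - q‖²` and hence `d(p) + d(q) ≤ √2 ‖p - q‖`.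
Comparing `γ(t)` with both endpoints gives
`2 d(γ(t)) ≤ ‖γ(t) - γ(0)‖ + ‖γ(1) - γ(t)‖ + d(γ(0)) + d(γ(1)) ≤ (1 + √2) ℓ(γ)`.
-/

open Set Metric

theorem norm_sub_le_integral_norm_of_hasDerivWithinAt {E : Type*} [NormedAddCommGroup E]
    [NormedSpace ℝ E] [CompleteSpace E] {γ γ' : ℝ → E} {a b : ℝ} (hab : a ≤ b)
    (hγ : ∀ t ∈ Icc a b, HasDerivWithinAt γ (γ' t) (Icc a b) t)
    (hγ' : ContinuousOn γ' (Icc a b)) :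
    ‖γ b - γ a‖ ≤ ∫ s in a..b, ‖γ' s‖ := by
  have hftc : ∫ s in a..b, γ' s = γ b - γ a :=
    intervalIntegral.integral_eq_sub_of_hasDerivAt_of_le hab
      (fun t ht => (hγ t ht).continuousWithinAt)
      (fun t ht => (hγ t (Ioo_subset_Icc_self ht)).hasDerivAt (Icc_mem_nhds ht.1 ht.2))
      (hγ'.intervalIntegrable_of_Icc hab)
  exact hftc ▸ intervalIntegral.norm_integral_le_integral_norm hab

theorem norm_sub_add_norm_sub_le_integral_norm_of_hasDerivWithinAt {E : Type*}
    [NormedAddCommGroup E] [NormedSpace ℝ E] [CompleteSpace E] {γ γ' : ℝ → E} {a b t : ℝ}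
    (ht : t ∈ Icc a b) (hγ : ∀ t ∈ Icc a b, HasDerivWithinAt γ (γ' t) (Icc a b) t)
    (hγ' : ContinuousOn γ' (Icc a b)) :
    ‖γ t - γ a‖ + ‖γ b - γ t‖ ≤ ∫ s in a..b, ‖γ' s‖ := by
  have hpiece {c d : ℝ} (hac : a ≤ c) (hdb : d ≤ b) (hcd : c ≤ d) :
      ‖γ d - γ c‖ ≤ ∫ s in c..d, ‖γ' s‖ :=
    have hI : Icc c d ⊆ Icc a b := Icc_subset_Icc hac hdb
    norm_sub_le_integral_norm_of_hasDerivWithinAt hcd (fun s hs => (hγ s (hI hs)).mono hI)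
      (hγ'.mono hI)
  have hint {c d : ℝ} (hac : a ≤ c) (hdb : d ≤ b) (hcd : c ≤ d) :
      IntervalIntegrable (fun s => ‖γ' s‖) MeasureTheory.volume c d :=
    (hγ'.norm.mono (Icc_subset_Icc hac hdb)).intervalIntegrable_of_Icc hcd
  rw [← intervalIntegral.integral_add_adjacent_intervals (hint le_rfl ht.2 ht.1)
    (hint ht.1 le_rfl ht.2)]
  exact add_le_add (hpiece le_rfl ht.2 ht.1) (hpiece ht.1 le_rfl ht.2)

theorem add_le_sqrt_two_mul_of_sq_add_sq_le {a b c : ℝ} (ha : 0 ≤ a) (hb : 0 ≤ b) (hc : 0 ≤ c)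
    (h : a ^ 2 + b ^ 2 ≤ c ^ 2) : a + b ≤ √2 * c := by
  rw [← Real.sqrt_sq hc, ← Real.sqrt_mul zero_le_two, Real.le_sqrt (by positivity) (by positivity)]
  nlinarith [sq_nonneg (a - b)]

section Lagrangians

variable {n m : ℕ}

lemma mem_L0 {p : E2 n} : p ∈ L0 n ↔ p.fst = 0 := Iff.rfl

lemma mem_L1 {p : E2 n} :
    p ∈ L1 n m ↔ (∀ j : Fin n, (j : ℕ) < m → p.fst j = 0) ∧
      ∀ j : Fin n, m ≤ (j : ℕ) → p.snd j = 0 :=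
  Iff.rfl

lemma E2.norm_sq_eq (p : E2 n) : ‖p‖ ^ 2 = ∑ j, (p.fst j ^ 2 + p.snd j ^ 2) := by
  simp [WithLp.prod_norm_sq_eq_of_L2, EuclideanSpace.norm_sq_eq, Finset.sum_add_distrib]

noncomputable def projInter (m : ℕ) (p : E2 n) : E2 n :=
  WithLp.toLp 2 (0, WithLp.toLp 2 fun j : Fin n => if (j : ℕ) < m then p.snd j else 0)

lemma projInter_mem (p : E2 n) : projInter m p ∈ L0 n ∩ L1 n m := by
  refine ⟨rfl, fun j _ => rfl, fun j hj => ?_⟩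
  simp [projInter, hj.not_gt]

lemma norm_sub_projInter_sq (p : E2 n) :
    ‖p - projInter m p‖ ^ 2 =
      ∑ j : Fin n, (p.fst j ^ 2 + if (j : ℕ) < m then 0 else p.snd j ^ 2) := by
  rw [E2.norm_sq_eq]
  refine Finset.sum_congr rfl fun j _ => ?_
  split_ifs <;> simp [projInter, *]

lemma infDist_sq_add_infDist_sq_le {p q : E2 n} (hp : p ∈ L0 n) (hq : q ∈ L1 n m) :
    infDist p (L0 n ∩ L1 n m) ^ 2 + infDist q (L0 n ∩ L1 n m) ^ 2 ≤ ‖p - q‖ ^ 2 := by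
  have hproj (x : E2 n) : infDist x (L0 n ∩ L1 n m) ^ 2 ≤ ‖x - projInter m x‖ ^ 2 :=
    pow_le_pow_left₀ infDist_nonneg
      ((infDist_le_dist_of_mem (projInter_mem x)).trans_eq (dist_eq_norm _ _)) 2
  refine (add_le_add (hproj p) (hproj q)).trans ?_
  rw [norm_sub_projInter_sq, norm_sub_projInter_sq, E2.norm_sq_eq, ← Finset.sum_add_distrib]
  refine Finset.sum_le_sum fun j _ => ?_
  obtain ⟨hqx, hqy⟩ := mem_L1.1 hq
  have hpx : p.fst j = 0 := by rw [mem_L0.1 hp]; rfl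
  split_ifs with hj
  · simp only [hpx, hqx j hj, WithLp.sub_fst, WithLp.sub_snd, PiLp.sub_apply]
    nlinarith
  · simp only [hpx, hqy j (not_lt.1 hj), WithLp.sub_fst, WithLp.sub_snd, PiLp.sub_apply]
    nlinarith

end Lagrangians

theorem path_close_to_intersection_general (n m : ℕ)
    (γ γ' : ℝ → E2 n)
    (hderiv : ∀ t ∈ Set.Icc (0:ℝ) 1, HasDerivWithinAt γ (γ' t) (Set.Icc 0 1) t)
    (hcont : ContinuousOn γ' (Set.Icc 0 1))
    (h0 : γ 0 ∈ L0 n) (h1 : γ 1 ∈ L1 n m)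
    (t : ℝ) (ht : t ∈ Set.Icc (0:ℝ) 1) :
    Metric.infDist (γ t) (L0 n ∩ L1 n m) ≤
      (1 + 1 / Real.sqrt 2) * ∫ s in (0:ℝ)..1, ‖γ' s‖ := by
  set S := L0 n ∩ L1 n m
  set ℓ := ∫ s in (0:ℝ)..1, ‖γ' s‖
  have hpath : ‖γ t - γ 0‖ + ‖γ 1 - γ t‖ ≤ ℓ :=
    norm_sub_add_norm_sub_le_integral_norm_of_hasDerivWithinAt ht hderiv hcont
  have hchord : ‖γ 1 - γ 0‖ ≤ ℓ :=
    (norm_sub_le_norm_sub_add_norm_sub _ (γ t) _).trans (by linarith)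
  have hsep : infDist (γ 0) S + infDist (γ 1) S ≤ √2 * ℓ :=
    (add_le_sqrt_two_mul_of_sq_add_sq_le infDist_nonneg infDist_nonneg (norm_nonneg _)
      (norm_sub_rev (γ 0) _ ▸ infDist_sq_add_infDist_sq_le h0 h1)).trans (by gcongr)
  have hfrom0 := infDist_le_infDist_add_dist (s := S) (x := γ t) (y := γ 0)
  have hfrom1 := infDist_le_infDist_add_dist (s := S) (x := γ t) (y := γ 1)
  rw [dist_eq_norm] at hfrom0
  rw [dist_eq_norm, norm_sub_rev] at hfrom1
  have hℓ : 0 ≤ ℓ := by linarith [norm_nonneg (γ t - γ 0), norm_nonneg (γ 1 - γ t)]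
  calc infDist (γ t) S ≤ (1 / 2 + √2 / 2) * ℓ := by linarith
    _ = (1 / 2 + 1 / √2) * ℓ := by rw [Real.sqrt_div_self']
    _ ≤ (1 + 1 / √2) * ℓ := by gcongr; norm_num

/-- a C¹ path from `L₀` to `L₁` stays within distance
`(1 + 1/√2) · ℓ(γ)` of the intersection `L₀ ∩ L₁`. -/
theorem path_close_to_intersection (n m : ℕ) (hn : 1 ≤ n) (hm : m ≤ n)
    (γ γ' : ℝ → E2 n)
    (hderiv : ∀ t ∈ Set.Icc (0:ℝ) 1, HasDerivWithinAt γ (γ' t) (Set.Icc 0 1) t)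
    (hcont : ContinuousOn γ' (Set.Icc 0 1))
    (h0 : γ 0 ∈ L0 n) (h1 : γ 1 ∈ L1 n m)
    (t : ℝ) (ht : t ∈ Set.Icc (0:ℝ) 1) :
    Metric.infDist (γ t) (L0 n ∩ L1 n m) ≤
      (1 + 1 / Real.sqrt 2) * ∫ s in (0:ℝ)..1, ‖γ' s‖ :=
  path_close_to_intersection_general n m γ γ' hderiv hcont h0 h1 t ht
end

section
/- Let γ > 0 and let E : [0,∞) → ℝ be a nonincreasing, nonnegative function such that for Lebesgue-almost every s ≥ 0 the function E is differentiable at s and E′(s) ≤ −2γ·E(s). Then E(s) ≤ E(0)·e^{−2γs} for every s ≥ 0. -/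
open MeasureTheory Filter Set Function

/-- Key one-step estimate: `E b * (1 + 2γ(b-a)) ≤ E a` for `0 ≤ a ≤ b`. -/
lemma exp_decay_step (γ : ℝ) (hγ : 0 < γ) (E : ℝ → ℝ)
    (hanti : AntitoneOn E (Set.Ici 0))
    (hnonneg : ∀ s ∈ Set.Ici (0:ℝ), 0 ≤ E s)
    (hderiv : ∀ᵐ s ∂(volume.restrict (Set.Ici (0:ℝ))),
      ∃ d : ℝ, HasDerivAt E d s ∧ d ≤ -2 * γ * E s)
    {a b : ℝ} (ha : 0 ≤ a) (hab : a ≤ b) :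
    E b * (1 + 2 * γ * (b - a)) ≤ E a := by
  rcases eq_or_lt_of_le hab with rfl | hab
  · simp [sub_self]
  -- the monotone extension `F`
  set F : ℝ → ℝ := fun x => -E (max x 0) with hF_def
  have hF : Monotone F := by
    intro x y hxy
    exact neg_le_neg (hanti (le_max_right x 0) (le_max_right y 0)
      (max_le_max hxy le_rfl))
  set μ := hF.stieltjesFunction.measure with hμ
  -- a.e. lower bound for the Radon–Nikodym derivative on `Ioo a b`
  have hIoo : Set.Ioo a b ⊆ Set.Ici (0:ℝ) := fun x hx => ha.trans hx.1.le
  have hae : ∀ᵐ x ∂(volume.restrict (Set.Ioo a b)),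
      ENNReal.ofReal (2 * γ * E b) ≤ μ.rnDeriv volume x := by
    have h1 : ∀ᵐ x ∂(volume.restrict (Set.Ioo a b)),
        HasDerivAt F ((μ.rnDeriv volume x).toReal) x :=
      ae_restrict_of_ae hF.ae_hasDerivAt
    have h2 : ∀ᵐ x ∂(volume.restrict (Set.Ioo a b)),
        ∃ d : ℝ, HasDerivAt E d x ∧ d ≤ -2 * γ * E x :=
      ae_restrict_of_ae_restrict_of_subset hIoo hderiv
    have h3 : ∀ᵐ x ∂(volume.restrict (Set.Ioo a b)), x ∈ Set.Ioo a b :=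
      ae_restrict_mem measurableSet_Ioo
    filter_upwards [h1, h2, h3] with x hx1 hx2 hx3
    obtain ⟨d, hd, hdle⟩ := hx2
    have hx0 : 0 < x := lt_of_le_of_lt ha hx3.1
    -- F agrees with -E near x
    have hFE : F =ᶠ[nhds x] fun y => -E y := by
      filter_upwards [eventually_gt_nhds hx0] with y hy
      simp [hF_def, max_eq_left hy.le]
    have hdF : HasDerivAt F (-d) x := hd.neg.congr_of_eventuallyEq hFE
    have huniq : (μ.rnDeriv volume x).toReal = -d := hx1.unique hdF
    have hge : 2 * γ * E b ≤ (μ.rnDeriv volume x).toReal := by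
      rw [huniq]
      have : 2 * γ * E b ≤ 2 * γ * E x :=
        mul_le_mul_of_nonneg_left (hanti (hIoo hx3) (ha.trans hab.le) hx3.2.le)
          (by positivity)
      linarith
    rcases eq_or_ne (μ.rnDeriv volume x) ⊤ with htop | htop
    · simp [htop]
    · rw [← ENNReal.ofReal_toReal htop]
      exact ENNReal.ofReal_le_ofReal hge
  -- integrate
  have hlow : ENNReal.ofReal (2 * γ * E b) * ENNReal.ofReal (b - a)
      ≤ μ (Set.Ioo a b) := by
    calc ENNReal.ofReal (2 * γ * E b) * ENNReal.ofReal (b - a)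
        = ∫⁻ _ in Set.Ioo a b, ENNReal.ofReal (2 * γ * E b) ∂volume := by
          rw [setLIntegral_const, Real.volume_Ioo]
      _ ≤ ∫⁻ x in Set.Ioo a b, μ.rnDeriv volume x ∂volume :=
          lintegral_mono_ae hae
      _ ≤ μ (Set.Ioo a b) := Measure.setLIntegral_rnDeriv_le _
  have hup : μ (Set.Ioo a b) ≤ ENNReal.ofReal (E a - E b) := by
    rw [hμ, StieltjesFunction.measure_Ioo]
    apply ENNReal.ofReal_le_ofReal
    have h1 : leftLim (hF.stieltjesFunction : ℝ → ℝ) b ≤ F b := by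
      refine le_of_tendsto (hF.stieltjesFunction.mono.tendsto_leftLim b) ?_
      filter_upwards [self_mem_nhdsWithin] with y (hy : y < b)
      exact hF.rightLim_le hy
    have h2 : F a ≤ hF.stieltjesFunction a := hF.le_rightLim le_rfl
    have hFa : F a = -E a := by simp [hF_def, max_eq_left ha]
    have hFb : F b = -E b := by simp [hF_def, max_eq_left (ha.trans hab.le)]
    have := sub_le_sub h1 h2
    rw [hFa, hFb] at this
    linarith
  have hfin : ENNReal.ofReal (2 * γ * E b) * ENNReal.ofReal (b - a)
      ≤ ENNReal.ofReal (E a - E b) := hlow.trans hup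
  rw [← ENNReal.ofReal_mul (mul_nonneg (by positivity) (hnonneg b (ha.trans hab.le)))] at hfin
  have hEab : E b ≤ E a := hanti (le_refl 0 |>.trans ha) (ha.trans hab.le) hab.le
  have := (ENNReal.ofReal_le_ofReal_iff (by linarith)).mp hfin
  nlinarith [hnonneg b (ha.trans hab.le)]

/-- exponential decay from the differential inequality
`E′(s) ≤ −2γ·E(s)` for a nonincreasing nonnegative function `E` on `[0, ∞)`. -/
theorem exponential_decay_of_diff_ineq (γ : ℝ) (hγ : 0 < γ) (E : ℝ → ℝ)
    (hanti : AntitoneOn E (Set.Ici 0))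
    (hnonneg : ∀ s ∈ Set.Ici (0:ℝ), 0 ≤ E s)
    (hderiv : ∀ᵐ s ∂(volume.restrict (Set.Ici (0:ℝ))),
      ∃ d : ℝ, HasDerivAt E d s ∧ d ≤ -2 * γ * E s) :
    ∀ s ∈ Set.Ici (0:ℝ), E s ≤ E 0 * Real.exp (-2 * γ * s) := by
  intro s hs
  rw [Set.mem_Ici] at hs
  -- iterated step: E (k·h) · (1+2γh)^k ≤ E 0
  have hiter : ∀ (h : ℝ), 0 ≤ h → ∀ k : ℕ,
      E (k * h) * (1 + 2 * γ * h) ^ k ≤ E 0 := by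
    intro h hh k
    induction k with
    | zero => simp
    | succ k ih =>
        have hk0 : (0:ℝ) ≤ k * h := by positivity
        have hstep := exp_decay_step γ hγ E hanti hnonneg hderiv hk0
          (show (k:ℝ) * h ≤ (k+1 : ℕ) * h by push_cast; nlinarith)
        have hsimp : ((k+1 : ℕ) : ℝ) * h - k * h = h := by push_cast; ring
        rw [hsimp] at hstep
        calc E ((k+1 : ℕ) * h) * (1 + 2 * γ * h) ^ (k+1)
            = (E ((k+1 : ℕ) * h) * (1 + 2 * γ * h)) * (1 + 2 * γ * h) ^ k := by
              ring
          _ ≤ E ((k:ℝ) * h) * (1 + 2 * γ * h) ^ k := by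
              apply mul_le_mul_of_nonneg_right hstep
              positivity
          _ ≤ E 0 := ih
  -- pass to the limit
  have hkey : ∀ n : ℕ, 1 ≤ n → E s * (1 + (2 * γ * s) / n) ^ n ≤ E 0 := by
    intro n hn
    have hn0 : (0:ℝ) < n := by exact_mod_cast hn
    have := hiter (s / n) (by positivity) n
    have hsn : (n : ℝ) * (s / n) = s := by field_simp
    rw [hsn] at this
    convert this using 3
    ring
  have hlim : Tendsto (fun n : ℕ => E s * (1 + (2 * γ * s) / n) ^ n) atTop
      (nhds (E s * Real.exp (2 * γ * s))) :=
    (Real.tendsto_one_add_div_pow_exp (2 * γ * s)).const_mul (E s)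
  have hfin : E s * Real.exp (2 * γ * s) ≤ E 0 := by
    refine le_of_tendsto hlim ?_
    filter_upwards [eventually_ge_atTop 1] with n hn using hkey n hn
  have hexp : (0:ℝ) < Real.exp (2 * γ * s) := Real.exp_pos _
  rw [show (-2 : ℝ) * γ * s = -(2 * γ * s) by ring, Real.exp_neg,
    ← div_eq_mul_inv, le_div_iff₀ hexp]
  exact hfin
end

section
/- Fix n ≥ 1 and 0 ≤ m ≤ n. Let S⁺ := {z ∈ ℂ : Re z ≥ 0, 0 ≤ Im z ≤ 1} and let u : S⁺ → ℂⁿ be a continuous map that is holomorphic on the interior {Re z > 0, 0 < Im z < 1}, satisfies the boundary conditions u({Im z = 0}) ⊆ Λ₀ and u({Im z = 1}) ⊆ Λ₁, has finite energy ∫ ‖u′‖² dλ < ∞ over the interior, and converges uniformly to a point: there is p ∈ ℂⁿ with sup_{t ∈ [0,1]} ‖u(s + it) − p‖ → 0 as s → ∞. Then there are constants c > 0 and γ > 0 such that ‖u(s + it) − p‖ ≤ c·e^{−γs} for all s ≥ 0 and t ∈ [0,1]. -/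
/-!
The limit `p` lies in the closed sets `Λ₀` and `Λ₁`, so each component `v = u j - p j` has
vanishing real part on the bottom edge of the half-strip, and on the top edge either vanishing
real part (`j < m`) or vanishing imaginary part (`m ≤ j`). Accordingly `I * v` or `v ^ 2` is
holomorphic, real on both edges and tends to `0` at infinity. Under `w = exp (-π * conj z)` the
half-strip becomes the closed upper half of the punctured unit disc; Schwarz reflection across
the real axis (holomorphic there by Morera's theorem) gives a bounded holomorphic function on the
punctured disc that tends to `0` at `0`. The singularity is removable, so Schwarz's lemma bounds
it by `C * ‖w‖ = C * exp (-π * Re z)`, whence `‖v z‖ ≤ C' * exp (-π * Re z / 2)`.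
-/

open MeasureTheory

/-- The linear Lagrangian `Λ₀ = {z ∈ ℂⁿ : Re zⱼ = 0 for all j}`. -/
def Lambda0 (n : ℕ) : Set (EuclideanSpace ℂ (Fin n)) :=
  {z | ∀ j : Fin n, (z j).re = 0}

/-- The linear Lagrangian `Λ₁ = {z ∈ ℂⁿ : Re zⱼ = 0 for j ≤ m, Im zⱼ = 0 for j > m}`. -/
def Lambda1 (n m : ℕ) : Set (EuclideanSpace ℂ (Fin n)) :=
  {z | (∀ j : Fin n, (j : ℕ) < m → (z j).re = 0) ∧
       (∀ j : Fin n, m ≤ (j : ℕ) → (z j).im = 0)}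

open Complex Set Filter Topology Metric intervalIntegral
open scoped ComplexConjugate Real Interval

section Morera

variable {E : Type*} [NormedAddCommGroup E] [NormedSpace ℂ E]

theorem integral_boundary_rect_eq_zero_of_differentiableAt_of_im_ne_zero {f : ℂ → E} {z w : ℂ}
    (hc : ContinuousOn f (Rectangle z w))
    (hd : ∀ ζ ∈ Rectangle z w, ζ.im ≠ 0 → DifferentiableAt ℂ f ζ) :
    (∫ x : ℝ in z.re..w.re, f (x + z.im * I)) - (∫ x : ℝ in z.re..w.re, f (x + w.im * I)) +
      I • (∫ y : ℝ in z.im..w.im, f (w.re + y * I)) -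
      I • (∫ y : ℝ in z.im..w.im, f (z.re + y * I)) = 0 := by
  -- Cauchy–Goursat applies to subrectangles whose open interior avoids the real axis; a
  -- rectangle crossing the axis is split there into two such.
  have avoiding : ∀ z' w', Rectangle z' w' ⊆ Rectangle z w →
      (0 : ℝ) ∉ Ioo (min z'.im w'.im) (max z'.im w'.im) →
      (∫ x : ℝ in z'.re..w'.re, f (x + z'.im * I)) - (∫ x : ℝ in z'.re..w'.re, f (x + w'.im * I)) +
        I • (∫ y : ℝ in z'.im..w'.im, f (w'.re + y * I)) -
        I • (∫ y : ℝ in z'.im..w'.im, f (z'.re + y * I)) = 0 := by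
    intro z' w' hsub h0
    refine integral_boundary_rect_eq_zero_of_continuousOn_of_differentiableOn f z' w'
      (hc.mono hsub) fun ζ hζ => (hd ζ (hsub ?_) ?_).differentiableWithinAt
    · exact ⟨Ioo_subset_Icc_self hζ.1, Ioo_subset_Icc_self hζ.2⟩
    · rintro h
      exact h0 (h ▸ hζ.2)
  by_cases h0 : (0 : ℝ) ∈ Ioo (min z.im w.im) (max z.im w.im)
  · have hvert : ∀ x ∈ [[z.re, w.re]], ∀ a ∈ [[z.im, w.im]], ∀ b ∈ [[z.im, w.im]],
        IntervalIntegrable (fun y : ℝ => f (x + y * I)) volume a b := by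
      intro x hx a ha b hb
      refine (hc.comp (by fun_prop) fun y hy => ?_).intervalIntegrable
      exact ⟨by simpa using hx, by simpa using uIcc_subset_uIcc ha hb hy⟩
    have h0' : (0 : ℝ) ∈ [[z.im, w.im]] := Ioo_subset_Icc_self h0
    have hlow := avoiding z ⟨w.re, 0⟩ ?_ ?_
    have hup := avoiding ⟨z.re, 0⟩ w ?_ ?_
    · rw [← integral_add_adjacent_intervals (hvert w.re right_mem_uIcc _ left_mem_uIcc _ h0')
        (hvert w.re right_mem_uIcc _ h0' _ right_mem_uIcc),
        ← integral_add_adjacent_intervals (hvert z.re left_mem_uIcc _ left_mem_uIcc _ h0')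
        (hvert z.re left_mem_uIcc _ h0' _ right_mem_uIcc)]
      linear_combination (norm := skip) hlow + hup
      simp only [smul_add]
      abel
    · exact reProdIm_subset_iff.2 (prod_mono subset_rfl (uIcc_subset_uIcc h0' right_mem_uIcc))
    · simpa using le_of_lt
    · exact reProdIm_subset_iff.2 (prod_mono subset_rfl (uIcc_subset_uIcc left_mem_uIcc h0'))
    · simpa using le_of_lt
  · exact avoiding z w subset_rfl h0

theorem differentiableOn_of_continuousOn_of_im_ne_zero [CompleteSpace E] {f : ℂ → E} {U : Set ℂ}
    (hU : IsOpen U) (hc : ContinuousOn f U)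
    (hd : ∀ z ∈ U, z.im ≠ 0 → DifferentiableAt ℂ f z) :
    DifferentiableOn ℂ f U := by
  refine (isConservativeOn_and_continuousOn_iff_isDifferentiableOn hU).1 ⟨fun z w hzw => ?_, hc⟩
  rw [← add_eq_zero_iff_eq_neg, wedgeIntegral_add_wedgeIntegral_eq]
  exact integral_boundary_rect_eq_zero_of_differentiableAt_of_im_ne_zero (hc.mono hzw)
    fun ζ hζ => hd ζ (hzw hζ)

end Morera

noncomputable def schwarzReflection (f : ℂ → ℂ) (z : ℂ) : ℂ :=
  if 0 ≤ z.im then f z else conj (f (conj z))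

section SchwarzReflection

variable {f : ℂ → ℂ} {U : Set ℂ}

theorem continuousOn_schwarzReflection (hUc : ∀ z ∈ U, conj z ∈ U)
    (hc : ContinuousOn f (U ∩ {z | 0 ≤ z.im})) (hr : ∀ z ∈ U, z.im = 0 → conj (f z) = f z) :
    ContinuousOn (schwarzReflection f) U := by
  refine ContinuousOn.if (fun z ⟨hz, hfr⟩ => ?_) ?_ ?_
  · rw [frontier_setOfPred_le_im] at hfr
    rw [conj_eq_iff_im.2 hfr, hr z hz hfr]
  · rwa [(isClosed_le continuous_const continuous_im).closure_eq]
  · simp only [not_le, closure_setOfPred_im_lt]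
    exact continuous_conj.comp_continuousOn
      (hc.comp continuous_conj.continuousOn fun z hz => ⟨hUc z hz.1, by simpa using hz.2⟩)

theorem differentiableAt_schwarzReflection (hUc : ∀ z ∈ U, conj z ∈ U)
    (hd : ∀ z ∈ U, 0 < z.im → DifferentiableAt ℂ f z) {z : ℂ} (hz : z ∈ U) (him : z.im ≠ 0) :
    DifferentiableAt ℂ (schwarzReflection f) z := by
  rcases him.lt_or_gt with hneg | hpos
  · have heq : conj ∘ f ∘ conj =ᶠ[𝓝 z] schwarzReflection f := by
      filter_upwards [(isOpen_lt continuous_im continuous_const).mem_nhds hneg] with w hw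
      simp [schwarzReflection, not_le.2 (show w.im < 0 from hw)]
    exact heq.differentiableAt_iff.1
      (differentiableAt_conj_conj_iff.2 (hd _ (hUc z hz) (by simpa using hneg)))
  · have heq : f =ᶠ[𝓝 z] schwarzReflection f := by
      filter_upwards [(isOpen_lt continuous_const continuous_im).mem_nhds hpos] with w hw
      simp [schwarzReflection, (show 0 < w.im from hw).le]
    exact heq.differentiableAt_iff.1 (hd z hz hpos)

theorem differentiableOn_schwarzReflection (hU : IsOpen U) (hUc : ∀ z ∈ U, conj z ∈ U)
    (hc : ContinuousOn f (U ∩ {z | 0 ≤ z.im})) (hd : ∀ z ∈ U, 0 < z.im → DifferentiableAt ℂ f z)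
    (hr : ∀ z ∈ U, z.im = 0 → conj (f z) = f z) :
    DifferentiableOn ℂ (schwarzReflection f) U :=
  differentiableOn_of_continuousOn_of_im_ne_zero hU
    (continuousOn_schwarzReflection hUc hc hr) fun _ hz him =>
      differentiableAt_schwarzReflection hUc hd hz him

end SchwarzReflection

def halfStrip : Set ℂ := {z | 0 ≤ z.re ∧ 0 ≤ z.im ∧ z.im ≤ 1}

def halfStripAtTop : Filter ℂ := comap re atTop ⊓ 𝓟 halfStrip

theorem tendsto_halfStripAtTop_of_norm_sub_le {E : Type*} [NormedAddCommGroup E] {u : ℂ → E}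
    {p : E} (h : ∀ ε > (0 : ℝ), ∃ s₀ : ℝ, ∀ s ≥ s₀, ∀ t ∈ Icc (0 : ℝ) 1,
      ‖u ((s : ℂ) + (t : ℂ) * I) - p‖ ≤ ε) :
    Tendsto u halfStripAtTop (𝓝 p) := by
  refine Metric.tendsto_nhds.2 fun ε hε => ?_
  obtain ⟨s₀, hs₀⟩ := h (ε / 2) (half_pos hε)
  rw [halfStripAtTop, eventually_inf_principal, (atTop_basis.comap re).eventually_iff]
  refine ⟨s₀, trivial, fun z hz hzS => ?_⟩
  have := hs₀ z.re hz z.im ⟨hzS.2.1, hzS.2.2⟩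
  rw [re_add_im, ← dist_eq_norm] at this
  linarith

theorem tendsto_ofReal_add_mul_I_halfStripAtTop {t : ℝ} (ht : t ∈ Icc (0 : ℝ) 1) :
    Tendsto (fun s : ℝ => (s : ℂ) + t * I) atTop halfStripAtTop := by
  refine tendsto_inf.2 ⟨tendsto_comap_iff.2 ?_, tendsto_principal.2 ?_⟩
  · exact tendsto_id.congr fun s => by simp
  · filter_upwards [eventually_ge_atTop 0] with s hs
    exact ⟨by simpa using hs, by simpa using ht.1, by simpa using ht.2⟩

theorem exists_norm_le_of_tendsto_halfStripAtTop {E : Type*} [NormedAddCommGroup E]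
    {f : ℂ → E} {a : E} (hc : ContinuousOn f halfStrip) (hlim : Tendsto f halfStripAtTop (𝓝 a)) :
    ∃ M, ∀ z ∈ halfStrip, ‖f z‖ ≤ M := by
  have hev : ∀ᶠ z in halfStripAtTop, ‖f z‖ ≤ ‖a‖ + 1 :=
    hlim.norm.eventually (eventually_le_nhds (lt_add_one _))
  rw [halfStripAtTop, eventually_inf_principal, (atTop_basis.comap re).eventually_iff] at hev
  obtain ⟨s₀, -, hs₀⟩ := hev
  have hK : Icc 0 s₀ ×ℂ Icc 0 1 ⊆ halfStrip := fun z ⟨hre, him⟩ => ⟨hre.1, him.1, him.2⟩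
  obtain ⟨M, hM⟩ := (isCompact_Icc.reProdIm isCompact_Icc).exists_bound_of_continuousOn
    (hc.mono hK)
  refine ⟨max M (‖a‖ + 1), fun z hz => ?_⟩
  rcases le_total z.re s₀ with hle | hge
  · exact (hM z ⟨⟨hz.1, hle⟩, hz.2.1, hz.2.2⟩).trans (le_max_left _ _)
  · exact (hs₀ hge hz).trans (le_max_right _ _)

theorem mem_of_tendsto_halfStripAtTop {E : Type*} [TopologicalSpace E] {u : ℂ → E} {p : E}
    {K : Set E} (hK : IsClosed K) (hlim : Tendsto u halfStripAtTop (𝓝 p)) {t : ℝ}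
    (ht : t ∈ Icc (0 : ℝ) 1) (hu : ∀ z : ℂ, 0 ≤ z.re → z.im = t → u z ∈ K) : p ∈ K :=
  hK.mem_of_tendsto (hlim.comp (tendsto_ofReal_add_mul_I_halfStripAtTop ht))
    ((eventually_ge_atTop 0).mono fun s hs => hu _ (by simpa) (by simp))

/-- Inverse of `z ↦ exp (-π * conj z)`, which maps `halfStrip` onto
`{w | 0 < ‖w‖ ≤ 1 ∧ 0 ≤ w.im}`, extended to the lower half plane by
`stripCoord (conj w) = stripCoord w`. -/
noncomputable def stripCoord (w : ℂ) : ℂ :=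
  (-Real.log ‖w‖ / π : ℝ) + (Real.arccos (w.re / ‖w‖) / π : ℝ) * I

@[simp] theorem stripCoord_re (w : ℂ) : (stripCoord w).re = -Real.log ‖w‖ / π := by
  simp [stripCoord]

@[simp] theorem stripCoord_im (w : ℂ) : (stripCoord w).im = Real.arccos (w.re / ‖w‖) / π := by
  simp [stripCoord]

@[simp] theorem stripCoord_conj (w : ℂ) : stripCoord (conj w) = stripCoord w := by
  simp [stripCoord]

theorem stripCoord_mem_halfStrip {w : ℂ} (hw : ‖w‖ ≤ 1) : stripCoord w ∈ halfStrip := by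
  refine ⟨?_, ?_, ?_⟩
  · simpa [neg_div] using div_nonpos_of_nonpos_of_nonneg (Real.log_nonpos (norm_nonneg w) hw)
      Real.pi_pos.le
  · simpa using div_nonneg (Real.arccos_nonneg _) Real.pi_pos.le
  · simpa [div_le_one Real.pi_pos] using Real.arccos_le_pi _

theorem stripCoord_exp_neg_pi_mul_conj {z : ℂ} (h0 : 0 ≤ z.im) (h1 : z.im ≤ 1) :
    stripCoord (exp (-π * conj z)) = z := by
  apply Complex.ext
  · simp [norm_exp, Real.pi_ne_zero]
  · have hcos : (exp (-π * conj z)).re / ‖exp (-π * conj z)‖ = Real.cos (π * z.im) := by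
      simp [norm_exp, exp_re, (Real.exp_pos _).ne']
    rw [stripCoord_im, hcos, Real.arccos_cos (by positivity) (by nlinarith [Real.pi_pos])]
    field_simp

theorem stripCoord_eq_conj_neg_log_div_pi {w : ℂ} (hw : 0 ≤ w.im) (hw0 : w ≠ 0) :
    stripCoord w = conj (-log w / π) := by
  apply Complex.ext
  · simp [log_re]
  · simp [log_im, arg_of_im_nonneg_of_ne_zero hw hw0, neg_div]

theorem continuousOn_stripCoord : ContinuousOn stripCoord {0}ᶜ := by
  intro w hw
  have hw : ‖w‖ ≠ 0 := norm_ne_zero_iff.2 hw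
  unfold stripCoord
  fun_prop (disch := assumption)

theorem stripCoord_im_eq_zero_or_one {w : ℂ} (hw : w.im = 0) (hw0 : w ≠ 0) :
    (stripCoord w).im = 0 ∨ (stripCoord w).im = 1 := by
  have hre : w.re ≠ 0 := fun h => hw0 (Complex.ext h hw)
  rw [stripCoord_im, ← abs_re_eq_norm.2 hw]
  rcases hre.lt_or_gt with hneg | hpos
  · simp [abs_of_neg hneg, hneg.ne, Real.pi_ne_zero]
  · simp [abs_of_pos hpos, hpos.ne']

theorem stripCoord_mem_interior {w : ℂ} (hw : 0 < w.im) (hw1 : ‖w‖ < 1) :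
    0 < (stripCoord w).re ∧ 0 < (stripCoord w).im ∧ (stripCoord w).im < 1 := by
  have hw0 : 0 < ‖w‖ := norm_pos_iff.2 fun h => by simp [h] at hw
  have hre : |w.re| < ‖w‖ := abs_re_lt_norm.2 hw.ne'
  refine ⟨?_, ?_, ?_⟩
  · simpa [neg_div] using div_pos (neg_pos.2 (Real.log_neg hw0 hw1)) Real.pi_pos
  · simp only [stripCoord_im]
    refine div_pos (Real.arccos_pos.2 ?_) Real.pi_pos
    rw [div_lt_one hw0]
    exact (le_abs_self _).trans_lt hre
  · rw [stripCoord_im, div_lt_one Real.pi_pos, Real.arccos_lt_pi, lt_div_iff₀ hw0]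
    linarith [neg_abs_le w.re]

theorem tendsto_stripCoord_nhdsNE_zero : Tendsto stripCoord (𝓝[≠] 0) halfStripAtTop := by
  refine tendsto_inf.2 ⟨tendsto_comap_iff.2 ?_, tendsto_principal.2 ?_⟩
  · have hlog := Real.tendsto_log_nhdsGT_zero.comp (tendsto_norm_nhdsNE_zero (E := ℂ))
    simpa [Function.comp_def, neg_div] using
      (tendsto_neg_atBot_atTop.comp hlog).atTop_div_const Real.pi_pos
  · filter_upwards [eventually_nhdsWithin_of_eventually_nhds (closedBall_mem_nhds 0 one_pos)]
      with w hw
    exact stripCoord_mem_halfStrip (mem_closedBall_zero_iff.1 hw)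

theorem norm_schwarzReflection_conj_comp_stripCoord (f : ℂ → ℂ) (w : ℂ) :
    ‖schwarzReflection (conj ∘ f ∘ stripCoord) w‖ = ‖f (stripCoord w)‖ := by
  unfold schwarzReflection
  split_ifs <;> simp

theorem differentiableOn_schwarzReflection_conj_comp_stripCoord {f : ℂ → ℂ}
    (hc : ContinuousOn f halfStrip)
    (hd : ∀ z : ℂ, 0 < z.re → 0 < z.im → z.im < 1 → DifferentiableAt ℂ f z)
    (hr : ∀ z ∈ halfStrip, z.im = 0 ∨ z.im = 1 → (f z).im = 0) :
    DifferentiableOn ℂ (schwarzReflection (conj ∘ f ∘ stripCoord)) (ball 0 1 \ {0}) := by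
  refine differentiableOn_schwarzReflection (isOpen_ball.sdiff isClosed_singleton)
    (fun w hw => ⟨by simpa using hw.1, by simpa using hw.2⟩) ?_ (fun w hw him => ?_)
    (fun w hw him => ?_)
  · refine continuous_conj.comp_continuousOn (hc.comp (continuousOn_stripCoord.mono ?_) ?_)
    · exact fun w hw => hw.1.2
    · exact fun w hw => stripCoord_mem_halfStrip (mem_ball_zero_iff.1 hw.1.1).le
  · have hw1 : ‖w‖ < 1 := mem_ball_zero_iff.1 hw.1
    have hlog : DifferentiableAt ℂ (fun w => -log w / π) w :=
      ((differentiableAt_log (Or.inr him.ne')).neg).div_const _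
    have heq : (conj ∘ f ∘ conj) ∘ (fun w => -log w / π) =ᶠ[𝓝 w] conj ∘ f ∘ stripCoord := by
      filter_upwards [(isOpen_lt continuous_const continuous_im).mem_nhds him] with v hv
      simp [stripCoord_eq_conj_neg_log_div_pi (le_of_lt hv) fun h => by simp [h] at hv]
    obtain ⟨h0, h1, h2⟩ := stripCoord_mem_interior him hw1
    refine heq.differentiableAt_iff.1 (DifferentiableAt.comp w ?_ hlog)
    rw [differentiableAt_conj_conj_iff, ← stripCoord_eq_conj_neg_log_div_pi him.le hw.2]
    exact hd _ h0 h1 h2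
  · have hS := stripCoord_mem_halfStrip (mem_ball_zero_iff.1 hw.1).le
    simp only [Function.comp_apply, conj_conj]
    exact (conj_eq_iff_im.2 (hr _ hS (stripCoord_im_eq_zero_or_one him hw.2))).symm

theorem exists_norm_le_mul_exp_neg_pi_mul_re {f : ℂ → ℂ} (hc : ContinuousOn f halfStrip)
    (hd : ∀ z : ℂ, 0 < z.re → 0 < z.im → z.im < 1 → DifferentiableAt ℂ f z)
    (hr : ∀ z ∈ halfStrip, z.im = 0 ∨ z.im = 1 → (f z).im = 0)
    (hlim : Tendsto f halfStripAtTop (𝓝 0)) :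
    ∃ C > 0, ∀ z ∈ halfStrip, ‖f z‖ ≤ C * Real.exp (-π * z.re) := by
  obtain ⟨M, hM⟩ := exists_norm_le_of_tendsto_halfStripAtTop hc hlim
  set g := schwarzReflection (conj ∘ f ∘ stripCoord)
  have hg_lim : Tendsto g (𝓝[≠] 0) (𝓝 0) := by
    rw [tendsto_zero_iff_norm_tendsto_zero]
    simp_rw [g, norm_schwarzReflection_conj_comp_stripCoord]
    exact (tendsto_zero_iff_norm_tendsto_zero.1 hlim).comp tendsto_stripCoord_nhdsNE_zero
  -- the singularity at `0` of the reflected function is removable, and Schwarz's lemma applies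
  set G := Function.update g 0 0
  have hG : DifferentiableOn ℂ G (ball 0 1) :=
    (differentiableOn_compl_singleton_and_continuousAt_iff (ball_mem_nhds 0 one_pos)).1
      ⟨(differentiableOn_schwarzReflection_conj_comp_stripCoord hc hd hr).congr
        fun w hw => Function.update_of_ne hw.2 _ _, continuousAt_update_same.2 hg_lim⟩
  have hG0 : G 0 = 0 := Function.update_self _ _ _
  have hGg : ∀ w ≠ 0, G w = g w := fun w hw => Function.update_of_ne hw _ _
  set C := max M 1
  have hGC : ∀ w ∈ ball (0 : ℂ) 1, ‖G w‖ ≤ C * ‖w‖ := by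
    have hmaps : MapsTo G (ball 0 1) (closedBall (G 0) C) := by
      intro w hw
      rw [mem_closedBall, hG0, dist_zero_right]
      rcases eq_or_ne w 0 with rfl | hw0
      · simp [hG0, C]
      · rw [hGg w hw0, norm_schwarzReflection_conj_comp_stripCoord]
        exact (hM _ (stripCoord_mem_halfStrip (mem_ball_zero_iff.1 hw).le)).trans (le_max_left _ _)
    intro w hw
    simpa [hG0] using Complex.dist_le_div_mul_dist_of_mapsTo_ball hG hmaps hw
  refine ⟨C, by positivity, fun z hz => ?_⟩
  rcases hz.1.eq_or_lt with hre | hre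
  · rw [← hre, mul_zero, Real.exp_zero, mul_one]
    exact (hM z hz).trans (le_max_left M 1)
  · set w := exp (-π * conj z)
    have hw : ‖w‖ = Real.exp (-π * z.re) := by simp [w, norm_exp]
    have hw1 : w ∈ ball (0 : ℂ) 1 := by
      rw [mem_ball_zero_iff, hw, Real.exp_lt_one_iff]
      nlinarith [Real.pi_pos]
    calc ‖f z‖ = ‖G w‖ := by
          rw [hGg w (exp_ne_zero _), norm_schwarzReflection_conj_comp_stripCoord,
            stripCoord_exp_neg_pi_mul_conj hz.2.1 hz.2.2]
      _ ≤ C * Real.exp (-π * z.re) := hw ▸ hGC w hw1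

theorem exists_norm_le_mul_exp_neg_pi_mul_re_of_re_eq_zero {v : ℂ → ℂ}
    (hc : ContinuousOn v halfStrip)
    (hd : ∀ z : ℂ, 0 < z.re → 0 < z.im → z.im < 1 → DifferentiableAt ℂ v z)
    (hr : ∀ z ∈ halfStrip, z.im = 0 ∨ z.im = 1 → (v z).re = 0)
    (hlim : Tendsto v halfStripAtTop (𝓝 0)) :
    ∃ C > 0, ∀ z ∈ halfStrip, ‖v z‖ ≤ C * Real.exp (-π * z.re) := by
  obtain ⟨C, hC, hbound⟩ := exists_norm_le_mul_exp_neg_pi_mul_re (f := fun z => I * v z)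
    (continuousOn_const.mul hc) (fun z h0 h1 h2 => (hd z h0 h1 h2).const_mul I)
    (fun z hz h => by simp [hr z hz h]) (by simpa using hlim.const_mul I)
  exact ⟨C, hC, fun z hz => by simpa using hbound z hz⟩

theorem exists_norm_le_mul_exp_neg_pi_div_two_mul_re {v : ℂ → ℂ}
    (hc : ContinuousOn v halfStrip)
    (hd : ∀ z : ℂ, 0 < z.re → 0 < z.im → z.im < 1 → DifferentiableAt ℂ v z)
    (hr0 : ∀ z ∈ halfStrip, z.im = 0 → (v z).re = 0)
    (hi1 : ∀ z ∈ halfStrip, z.im = 1 → (v z).im = 0)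
    (hlim : Tendsto v halfStripAtTop (𝓝 0)) :
    ∃ C > 0, ∀ z ∈ halfStrip, ‖v z‖ ≤ C * Real.exp (-(π / 2) * z.re) := by
  -- `v ^ 2` is real on both edges
  obtain ⟨C, hC, hbound⟩ := exists_norm_le_mul_exp_neg_pi_mul_re (f := fun z => v z ^ 2)
    (hc.pow 2) (fun z h0 h1 h2 => (hd z h0 h1 h2).pow 2)
    (fun z hz h => h.elim (fun h => by simp [sq, hr0 z hz h]) fun h => by simp [sq, hi1 z hz h])
    (by simpa using hlim.pow 2)
  refine ⟨Real.sqrt C, Real.sqrt_pos.2 hC, fun z hz => ?_⟩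
  have hexp : Real.exp (-π * z.re) = Real.exp (-(π / 2) * z.re) ^ 2 := by
    rw [← Real.exp_nat_mul]; ring_nf
  rw [← Real.sqrt_sq (norm_nonneg (v z)), ← Real.sqrt_sq (Real.exp_pos _).le, ← Real.sqrt_mul hC.le,
    ← hexp]
  exact Real.sqrt_le_sqrt (by simpa using hbound z hz)

theorem norm_le_sum_norm_apply {𝕜 ι : Type*} [RCLike 𝕜] [Fintype ι] (x : EuclideanSpace 𝕜 ι) :
    ‖x‖ ≤ ∑ i, ‖x i‖ := by
  refine abs_le_of_sq_le_sq' ?_ (by positivity) |>.2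
  rw [EuclideanSpace.norm_eq, Real.sq_sqrt (by positivity)]
  exact Finset.sum_sq_le_sq_sum_of_nonneg fun _ _ => norm_nonneg _

theorem isClosed_Lambda0 (n : ℕ) : IsClosed (Lambda0 n) := by
  simp only [Lambda0, ofPred_forall]
  exact isClosed_iInter fun j => isClosed_eq (by fun_prop) continuous_const

theorem isClosed_Lambda1 (n m : ℕ) : IsClosed (Lambda1 n m) := by
  simp only [Lambda1, ofPred_and, ofPred_forall]
  exact (isClosed_iInter fun j => isClosed_iInter fun _ => isClosed_eq (by fun_prop)
    continuous_const).inter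
    (isClosed_iInter fun j => isClosed_iInter fun _ => isClosed_eq (by fun_prop) continuous_const)

section Lagrangian

variable {n m : ℕ} {u : ℂ → EuclideanSpace ℂ (Fin n)} {p : EuclideanSpace ℂ (Fin n)}

theorem exists_norm_apply_sub_le_mul_exp (hcont : ContinuousOn u halfStrip)
    (hdiff : ∀ z : ℂ, 0 < z.re → 0 < z.im → z.im < 1 → DifferentiableAt ℂ u z)
    (hbd0 : ∀ z : ℂ, 0 ≤ z.re → z.im = 0 → u z ∈ Lambda0 n)
    (hbd1 : ∀ z : ℂ, 0 ≤ z.re → z.im = 1 → u z ∈ Lambda1 n m)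
    (hlim : Tendsto u halfStripAtTop (𝓝 p)) (j : Fin n) :
    ∃ C > 0, ∀ z ∈ halfStrip, ‖u z j - p j‖ ≤ C * Real.exp (-(π / 2) * z.re) := by
  have hp0 : p ∈ Lambda0 n := mem_of_tendsto_halfStripAtTop (isClosed_Lambda0 n) hlim
    ⟨le_rfl, zero_le_one⟩ hbd0
  have hp1 : p ∈ Lambda1 n m := mem_of_tendsto_halfStripAtTop (isClosed_Lambda1 n m) hlim
    ⟨zero_le_one, le_rfl⟩ hbd1
  have hc : ContinuousOn (fun z => u z j - p j) halfStrip :=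
    ((PiLp.continuous_apply 2 _ j).comp_continuousOn hcont).sub continuousOn_const
  have hd : ∀ z : ℂ, 0 < z.re → 0 < z.im → z.im < 1 →
      DifferentiableAt ℂ (fun z => u z j - p j) z := fun z h0 h1 h2 =>
    ((EuclideanSpace.proj j).differentiableAt.comp z (hdiff z h0 h1 h2)).sub_const _
  have hl : Tendsto (fun z => u z j - p j) halfStripAtTop (𝓝 0) := by
    simpa using (((PiLp.continuous_apply 2 _ j).tendsto p).comp hlim).sub_const (p j)
  have hr0 : ∀ z ∈ halfStrip, z.im = 0 → (u z j - p j).re = 0 := fun z hz h => by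
    simp [hbd0 z hz.1 h j, hp0 j]
  rcases lt_or_ge (j : ℕ) m with hj | hj
  · obtain ⟨C, hC, hbound⟩ := exists_norm_le_mul_exp_neg_pi_mul_re_of_re_eq_zero hc hd
      (fun z hz h => h.elim (hr0 z hz) fun h => by simp [(hbd1 z hz.1 h).1 j hj, hp1.1 j hj]) hl
    refine ⟨C, hC, fun z hz => (hbound z hz).trans ?_⟩
    exact mul_le_mul_of_nonneg_left (Real.exp_le_exp.2 (by nlinarith [Real.pi_pos, hz.1])) hC.le
  · exact exists_norm_le_mul_exp_neg_pi_div_two_mul_re hc hd hr0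
      (fun z hz h => by simp [(hbd1 z hz.1 h).2 j hj, hp1.2 j hj]) hl

end Lagrangian

theorem strip_exponential_convergence_general (n m : ℕ)
    (u u' : ℂ → EuclideanSpace ℂ (Fin n)) (p : EuclideanSpace ℂ (Fin n))
    (hcont : ContinuousOn u {z : ℂ | 0 ≤ z.re ∧ 0 ≤ z.im ∧ z.im ≤ 1})
    (hderiv : ∀ z : ℂ, 0 < z.re → 0 < z.im → z.im < 1 → HasDerivAt u (u' z) z)
    (hbd0 : ∀ z : ℂ, 0 ≤ z.re → z.im = 0 → u z ∈ Lambda0 n)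
    (hbd1 : ∀ z : ℂ, 0 ≤ z.re → z.im = 1 → u z ∈ Lambda1 n m)
    (hconv : ∀ ε > (0:ℝ), ∃ s₀ : ℝ, ∀ s ≥ s₀, ∀ t ∈ Set.Icc (0:ℝ) 1,
      ‖u ((s : ℂ) + (t : ℂ) * Complex.I) - p‖ ≤ ε) :
    ∃ c > (0:ℝ), ∃ γ > (0:ℝ), ∀ s ≥ (0:ℝ), ∀ t ∈ Set.Icc (0:ℝ) 1,
      ‖u ((s : ℂ) + (t : ℂ) * Complex.I) - p‖ ≤ c * Real.exp (-γ * s) := by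
  have hlim := tendsto_halfStripAtTop_of_norm_sub_le hconv
  choose C hC hbound using exists_norm_apply_sub_le_mul_exp hcont
    (fun z h0 h1 h2 => (hderiv z h0 h1 h2).differentiableAt) hbd0 hbd1 hlim
  refine ⟨∑ j, C j + 1, add_pos_of_nonneg_of_pos (Finset.sum_nonneg fun j _ => (hC j).le) one_pos,
    π / 2, by positivity, fun s hs t ht => ?_⟩
  have hz : (s : ℂ) + t * I ∈ halfStrip := ⟨by simpa, by simpa using ht.1, by simpa using ht.2⟩
  calc ‖u (s + t * I) - p‖ ≤ ∑ j, ‖u (s + t * I) j - p j‖ := by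
        simpa using norm_le_sum_norm_apply (u (s + t * I) - p)
    _ ≤ ∑ j, C j * Real.exp (-(π / 2) * s) := by
        gcongr with j
        simpa using hbound j _ hz
    _ ≤ (∑ j, C j + 1) * Real.exp (-(π / 2) * s) := by
        rw [add_mul, Finset.sum_mul]
        linarith [Real.exp_pos (-(π / 2) * s)]

/-- exponential convergence for finite-energy holomorphic half-strips
with Lagrangian boundary conditions that converge uniformly to a point `p`: the
convergence is exponential in the first coordinate. -/
theorem strip_exponential_convergence (n m : ℕ) (hn : 1 ≤ n) (hm : m ≤ n)
    (u u' : ℂ → EuclideanSpace ℂ (Fin n)) (p : EuclideanSpace ℂ (Fin n))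
    (hcont : ContinuousOn u {z : ℂ | 0 ≤ z.re ∧ 0 ≤ z.im ∧ z.im ≤ 1})
    (hderiv : ∀ z : ℂ, 0 < z.re → 0 < z.im → z.im < 1 → HasDerivAt u (u' z) z)
    (hbd0 : ∀ z : ℂ, 0 ≤ z.re → z.im = 0 → u z ∈ Lambda0 n)
    (hbd1 : ∀ z : ℂ, 0 ≤ z.re → z.im = 1 → u z ∈ Lambda1 n m)
    (henergy : IntegrableOn (fun z => ‖u' z‖ ^ 2)
      {z : ℂ | 0 < z.re ∧ 0 < z.im ∧ z.im < 1})
    (hconv : ∀ ε > (0:ℝ), ∃ s₀ : ℝ, ∀ s ≥ s₀, ∀ t ∈ Set.Icc (0:ℝ) 1,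
      ‖u ((s : ℂ) + (t : ℂ) * Complex.I) - p‖ ≤ ε) :
    ∃ c > (0:ℝ), ∃ γ > (0:ℝ), ∀ s ≥ (0:ℝ), ∀ t ∈ Set.Icc (0:ℝ) 1,
      ‖u ((s : ℂ) + (t : ℂ) * Complex.I) - p‖ ≤ c * Real.exp (-γ * s) :=
  strip_exponential_convergence_general n m u u' p hcont hderiv hbd0 hbd1 hconv
end

section
/- Let n ≥ 1, let D* := {z ∈ ℂ : 0 < |z| < 1} be the punctured open unit disk, and let f : D* → ℂⁿ be holomorphic with finite energy ∫_{D*} ‖f′(z)‖² dλ(z) < ∞, where λ is Lebesgue measure on ℂ. Then f extends to a holomorphic map on the whole open unit disk, i.e. there is a holomorphic g : {|z| < 1} → ℂⁿ with g = f on D*. -/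
/-!
By the mean value property and Jensen's inequality, `‖f' z‖²` is at most the average of `‖f'‖²`
over the disc of radius `‖z‖ / 2` about `z`; this disc lies in the punctured disc, so
`‖f' z‖ ≤ C / ‖z‖` with `C² = 4 E / π`, `E` the energy. In the variable `w = log z` this says that
`f ∘ exp` has derivative bounded by `C` on a half-plane `re w ≤ a`, so `f` grows at most like
`C log (1 / ‖z‖)` near `0`. Hence `f z = o(1 / z)`, and Riemann's removable singularity theorem
applies.
-/

open MeasureTheory Metric Real Set Filter Topology Asymptotics

section PolarCoordinates

variable {F : Type*} [NormedAddCommGroup F] [NormedSpace ℝ F]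

theorem add_polarCoord_symm_eq_circleMap (c : ℂ) (p : ℝ × ℝ) :
    c + Complex.polarCoord.symm p = circleMap c p.1 p.2 := by
  rw [Complex.polarCoord_symm_apply, circleMap, Complex.exp_mul_I]
  push_cast
  ring

theorem setIntegral_closedBall_eq_integral_circleAverage {g : ℂ → F} {c : ℂ} {r : ℝ}
    (hr : 0 ≤ r) (hg : ContinuousOn g (closedBall c r)) :
    ∫ w in closedBall c r, g w = (2 * π) • ∫ ρ in 0..r, ρ • circleAverage g c ρ := by
  set S : Set (ℝ × ℝ) := Ioc 0 r ×ˢ Ioo (-π) π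
  set G : ℝ × ℝ → F := fun p ↦ p.1 • g (circleMap c p.1 p.2)
  have hS : S ⊆ polarCoord.target := by
    rw [polarCoord_target]
    exact prod_mono Ioc_subset_Ioi_self subset_rfl
  have hGint : IntegrableOn G S (volume.prod volume) := by
    refine ContinuousOn.integrableOn_compact (isCompact_Icc.prod isCompact_Icc) ?_
      |>.mono_set (prod_mono Ioc_subset_Icc_self Ioo_subset_Icc_self)
    refine continuousOn_fst.smul (hg.comp (by fun_prop) fun p hp ↦ ?_)
    simpa [dist_eq_norm, circleMap_sub_center, abs_of_nonneg hp.1.1] using hp.1.2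
  have hpolar : ∫ w in closedBall c r, g w = ∫ p in S, G p := by
    rw [← integral_indicator measurableSet_closedBall,
      ← integral_add_left_eq_self _ c, ← Complex.integral_comp_polarCoord_symm,
      ← inter_eq_right.mpr hS, ← setIntegral_indicator (measurableSet_Ioc.prod measurableSet_Ioo)]
    refine setIntegral_congr_fun Complex.polarCoord.open_target.measurableSet fun p hp ↦ ?_
    obtain ⟨hp₁ : 0 < p.1, hp₂⟩ := hp
    have hmem : circleMap c p.1 p.2 ∈ closedBall c r ↔ p ∈ S := by
      simp [S, dist_eq_norm, circleMap_sub_center, abs_of_pos hp₁, hp₁, hp₂]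
    rw [add_polarCoord_symm_eq_circleMap]
    by_cases hpS : p ∈ S
    · rw [indicator_of_mem (hmem.mpr hpS), indicator_of_mem hpS]
    · rw [indicator_of_notMem (hmem.not.mpr hpS), indicator_of_notMem hpS, smul_zero]
  have hinner : ∀ ρ, ∫ θ in Ioo (-π) π, G (ρ, θ) = (2 * π) • ρ • circleAverage g c ρ := by
    intro ρ
    rw [circleAverage_eq_integral_add (-π), smul_smul, smul_smul,
      mul_comm (2 * π), mul_assoc, mul_inv_cancel₀ two_pi_pos.ne', mul_one,
      intervalIntegral.integral_comp_add_right (fun θ ↦ g (circleMap c ρ θ)),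
      ← intervalIntegral.integral_smul, intervalIntegral.integral_of_le (by linarith [pi_pos]),
      integral_Ioc_eq_integral_Ioo, zero_add, show 2 * π + -π = π by ring]
  rw [hpolar, Measure.volume_eq_prod, setIntegral_prod G hGint, intervalIntegral.integral_of_le hr,
    ← integral_smul]
  simp only [hinner]

end PolarCoordinates

theorem isLittleO_inv_of_norm_le_sub_mul_log {E : Type*} [NormedAddCommGroup E] {f : ℂ → E}
    {A B : ℝ} (h : ∀ᶠ z in 𝓝[≠] 0, ‖f z‖ ≤ A - B * log ‖z‖) : f =o[𝓝[≠] 0] fun z ↦ z⁻¹ := by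
  have hconst : (fun _ : ℝ ↦ A) =o[𝓝[>] 0] fun t ↦ t⁻¹ :=
    isLittleO_const_left.mpr (.inr (tendsto_norm_atTop_atTop.comp tendsto_inv_nhdsGT_zero))
  have hlog : log =o[𝓝[>] 0] fun t ↦ t⁻¹ :=
    (isLittleO_log_rpow_nhdsGT_zero (r := -1) (by norm_num)).congr_right fun t ↦ rpow_neg_one t
  have hgrowth := (hconst.sub (hlog.const_mul_left B)).comp_tendsto
    (tendsto_norm_nhdsNE_zero (E := ℂ))
  refine isLittleO_norm_right.mp <| (IsBigO.of_bound 1 ?_).trans_isLittleO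
    (hgrowth.congr_right fun z : ℂ ↦ (norm_inv z).symm)
  filter_upwards [h] with z hz
  simpa using hz.trans (le_abs_self _)

section Holomorphic

variable {E : Type*} [NormedAddCommGroup E] [NormedSpace ℂ E]

theorem norm_le_of_norm_deriv_le_div_norm {f : ℂ → E} {a C : ℝ} (hC : 0 ≤ C)
    (hf : ∀ z : ℂ, z ≠ 0 → ‖z‖ ≤ exp a → DifferentiableAt ℂ f z)
    (hf' : ∀ z : ℂ, z ≠ 0 → ‖z‖ ≤ exp a → ‖deriv f z‖ ≤ C / ‖z‖)
    {z : ℂ} (hz : z ≠ 0) (hza : ‖z‖ ≤ exp a) :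
    ‖f z‖ ≤ ‖f (exp a)‖ + C * (a - log ‖z‖ + π) := by
  have hexp : ∀ w : ℂ, w.re ≤ a → Complex.exp w ≠ 0 ∧ ‖Complex.exp w‖ ≤ exp a := fun w hw ↦
    ⟨Complex.exp_ne_zero w, by rw [Complex.norm_exp]; exact exp_le_exp.mpr hw⟩
  have hderiv : ∀ w : ℂ, w.re ≤ a →
      HasDerivAt (f ∘ Complex.exp) (Complex.exp w • deriv f (Complex.exp w)) w := fun w hw ↦
    (hf _ (hexp w hw).1 (hexp w hw).2).hasDerivAt.scomp w (Complex.hasDerivAt_exp w)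
  have hbound : ∀ w ∈ {w : ℂ | w.re ≤ a}, ‖deriv (f ∘ Complex.exp) w‖ ≤ C := by
    intro w hw
    have hpos : 0 < ‖Complex.exp w‖ := norm_pos_iff.mpr (hexp w hw).1
    rw [(hderiv w hw).deriv, norm_smul]
    calc ‖Complex.exp w‖ * ‖deriv f (Complex.exp w)‖ ≤ ‖Complex.exp w‖ * (C / ‖Complex.exp w‖) :=
          by gcongr; exact hf' _ (hexp w hw).1 (hexp w hw).2
      _ = C := by field_simp
  have hlog_norm : log ‖z‖ ≤ a := (log_le_iff_le_exp (norm_pos_iff.mpr hz)).mpr hza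
  have hlog : (Complex.log z).re ≤ a := by rwa [Complex.log_re]
  have hmvt := (convex_halfSpace_re_le a).norm_image_sub_le_of_norm_deriv_le
    (fun w hw ↦ (hderiv w hw).differentiableAt) hbound
    (show (a : ℂ) ∈ {w : ℂ | w.re ≤ a} by simp)
    (show Complex.log z ∈ {w : ℂ | w.re ≤ a} from hlog)
  rw [Function.comp_apply, Function.comp_apply, Complex.exp_log hz, ← Complex.ofReal_exp] at hmvt
  have hdist : ‖Complex.log z - a‖ ≤ a - log ‖z‖ + π := by
    refine (Complex.norm_le_abs_re_add_abs_im _).trans ?_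
    rw [Complex.sub_re, Complex.sub_im, Complex.log_re, Complex.log_im, Complex.ofReal_re,
      Complex.ofReal_im, sub_zero, abs_of_nonpos (sub_nonpos.mpr hlog_norm)]
    linarith [Complex.abs_arg_le_pi z]
  calc ‖f z‖ ≤ ‖f (exp a)‖ + ‖f z - f (exp a)‖ := norm_le_norm_add_norm_sub' _ _
    _ ≤ ‖f (exp a)‖ + C * (a - log ‖z‖ + π) := by
        gcongr; exact hmvt.trans (mul_le_mul_of_nonneg_left hdist hC)

variable [CompleteSpace E]

theorem norm_sq_le_circleAverage_norm_sq {f : ℂ → E} {c : ℂ} {R : ℝ}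
    (hf : DiffContOnCl ℂ f (ball c |R|)) :
    ‖f c‖ ^ 2 ≤ circleAverage (fun z ↦ ‖f z‖ ^ 2) c R := by
  have hcont : Continuous fun θ ↦ f (circleMap c R θ) :=
    hf.continuousOn_ball.comp_continuous (continuous_circleMap c R)
      fun θ ↦ by simp [dist_eq_norm, circleMap_sub_center]
  rw [← hf.circleAverage, circleAverage_eq_intervalAverage, circleAverage_eq_intervalAverage]
  refine (convexOn_univ_norm.pow (fun _ _ ↦ norm_nonneg _) 2).map_set_average_le
    (continuous_norm.pow 2).continuousOn isClosed_univ ?_ measure_Ioc_lt_top.ne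
    (by simp) (hcont.integrableOn_uIoc) ((continuous_norm.pow 2).comp hcont).integrableOn_uIoc
  simp [Real.pi_pos.ne']

theorem pi_mul_sq_mul_norm_sq_le_setIntegral_norm_sq {f : ℂ → E} {c : ℂ} {r : ℝ} (hr : 0 < r)
    (hf : DiffContOnCl ℂ f (ball c r)) :
    π * r ^ 2 * ‖f c‖ ^ 2 ≤ ∫ w in closedBall c r, ‖f w‖ ^ 2 := by
  have hcont : ContinuousOn (fun w ↦ ‖f w‖ ^ 2) (closedBall c r) := hf.continuousOn_ball.norm.pow 2
  have hmean : ∀ ρ ∈ Icc 0 r, ρ * ‖f c‖ ^ 2 ≤ ρ * circleAverage (fun w ↦ ‖f w‖ ^ 2) c ρ :=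
    fun ρ hρ ↦ mul_le_mul_of_nonneg_left (norm_sq_le_circleAverage_norm_sq
      (hf.mono (ball_subset_ball (by rw [abs_of_nonneg hρ.1]; exact hρ.2)))) hρ.1
  have hint : IntervalIntegrable (fun ρ ↦ ρ * circleAverage (fun w ↦ ‖f w‖ ^ 2) c ρ) volume 0 r :=
    (continuousOn_id.mul ((hcont.mono fun z hz ↦ by simpa [dist_eq_norm] using hz.2).circleAverage
      fun _ hρ ↦ hρ.1)).intervalIntegrable_of_Icc hr.le
  calc π * r ^ 2 * ‖f c‖ ^ 2 = 2 * π * ∫ ρ in 0..r, ρ * ‖f c‖ ^ 2 := by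
        rw [intervalIntegral.integral_mul_const, integral_id]; ring
    _ ≤ 2 * π * ∫ ρ in 0..r, ρ * circleAverage (fun w ↦ ‖f w‖ ^ 2) c ρ := by
        gcongr
        exact intervalIntegral.integral_mono_on hr.le
          ((continuous_id.mul continuous_const).intervalIntegrable _ _) hint hmean
    _ = ∫ w in closedBall c r, ‖f w‖ ^ 2 :=
        (setIntegral_closedBall_eq_integral_circleAverage hr.le hcont).symm

theorem mul_norm_deriv_le_sqrt_setIntegral {f : ℂ → E} {U : Set ℂ} {z : ℂ} {r : ℝ}
    (hU : IsOpen U) (hf : DifferentiableOn ℂ f U)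
    (henergy : IntegrableOn (fun w ↦ ‖deriv f w‖ ^ 2) U) (hr : 0 < r) (hzr : closedBall z r ⊆ U) :
    r * ‖deriv f z‖ ≤ √((∫ w in U, ‖deriv f w‖ ^ 2) / π) := by
  have hf' : DiffContOnCl ℂ (deriv f) (ball z r) :=
    ((hf.analyticOnNhd hU).deriv.differentiableOn.mono
      (closure_ball_subset_closedBall.trans hzr)).diffContOnCl
  refine le_sqrt_of_sq_le ((le_div_iff₀ pi_pos).mpr ?_)
  calc (r * ‖deriv f z‖) ^ 2 * π = π * r ^ 2 * ‖deriv f z‖ ^ 2 := by ring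
    _ ≤ ∫ w in closedBall z r, ‖deriv f w‖ ^ 2 :=
        pi_mul_sq_mul_norm_sq_le_setIntegral_norm_sq hr hf'
    _ ≤ ∫ w in U, ‖deriv f w‖ ^ 2 :=
        setIntegral_mono_set henergy (.of_forall fun _ ↦ by positivity) hzr.eventuallyLE

end Holomorphic

theorem removable_singularity_finite_energy_general (n : ℕ)
    (f : ℂ → EuclideanSpace ℂ (Fin n))
    (hf : DifferentiableOn ℂ f (Metric.ball (0:ℂ) 1 \ {0}))
    (henergy : IntegrableOn (fun z => ‖deriv f z‖ ^ 2) (Metric.ball (0:ℂ) 1 \ {0})) :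
    ∃ g : ℂ → EuclideanSpace ℂ (Fin n),
      DifferentiableOn ℂ g (Metric.ball (0:ℂ) 1) ∧
      Set.EqOn g f (Metric.ball (0:ℂ) 1 \ {0}) := by
  set D : Set ℂ := ball 0 1 \ {0}
  have hD : IsOpen D := isOpen_ball.sdiff isClosed_singleton
  set C : ℝ := 2 * √((∫ w in D, ‖deriv f w‖ ^ 2) / π)
  have hball : ∀ z : ℂ, z ≠ 0 → ‖z‖ ≤ exp (-1) → closedBall z (‖z‖ / 2) ⊆ D := by
    intro z hz hze w hw
    rw [mem_closedBall, dist_eq_norm] at hw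
    refine ⟨mem_ball_zero_iff.mpr ?_, fun hw0 ↦ ?_⟩
    · linarith [norm_le_norm_add_norm_sub' w z, exp_neg_one_lt_half]
    · rw [hw0, zero_sub, norm_neg] at hw
      linarith [norm_pos_iff.mpr hz]
  have hf' : ∀ z : ℂ, z ≠ 0 → ‖z‖ ≤ exp (-1) → ‖deriv f z‖ ≤ C / ‖z‖ := by
    intro z hz hze
    rw [le_div_iff₀ (norm_pos_iff.mpr hz)]
    linarith [mul_norm_deriv_le_sqrt_setIntegral hD hf henergy (by positivity) (hball z hz hze)]
  have hgrowth : ∀ᶠ z in 𝓝[≠] 0,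
      ‖f z - f 0‖ ≤ ‖f (exp (-1))‖ + C * (π - 1) + ‖f 0‖ - C * log ‖z‖ := by
    filter_upwards [self_mem_nhdsWithin,
      nhdsWithin_le_nhds (closedBall_mem_nhds (0 : ℂ) (exp_pos (-1)))] with z hz hze
    rw [mem_closedBall_zero_iff] at hze
    have hfz := norm_le_of_norm_deriv_le_div_norm (by positivity)
      (fun w hw hwe ↦ hf.differentiableAt (hD.mem_nhds (hball w hw hwe (mem_closedBall_self
        (by positivity))))) hf' hz hze
    linarith [norm_sub_le (f z) (f 0)]
  have ho : (fun z ↦ f z - f 0) =o[𝓝[≠] 0] fun z ↦ (z - 0)⁻¹ := by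
    simpa only [sub_zero] using isLittleO_inv_of_norm_le_sub_mul_log hgrowth
  exact ⟨_, Complex.differentiableOn_update_limUnder_of_isLittleO (ball_mem_nhds 0 one_pos) hf ho,
    fun z hz ↦ Function.update_of_ne hz.2 _ _⟩

/-- removal of singularities for finite-energy holomorphic maps on the
punctured unit disk: a holomorphic map `f : D* → ℂⁿ` with
`∫_{D*} ‖f′‖² < ∞` extends holomorphically over the puncture. -/
theorem removable_singularity_finite_energy (n : ℕ) (hn : 1 ≤ n)
    (f : ℂ → EuclideanSpace ℂ (Fin n))
    (hf : DifferentiableOn ℂ f (Metric.ball (0:ℂ) 1 \ {0}))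
    (henergy : IntegrableOn (fun z => ‖deriv f z‖ ^ 2) (Metric.ball (0:ℂ) 1 \ {0})) :
    ∃ g : ℂ → EuclideanSpace ℂ (Fin n),
      DifferentiableOn ℂ g (Metric.ball (0:ℂ) 1) ∧
      Set.EqOn g f (Metric.ball (0:ℂ) 1 \ {0}) :=
  removable_singularity_finite_energy_general n f hf henergy
end
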